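/- Let K be a field with char K ∉ {2,3} and let a, b ∈ K with b ≠ 0 and a² ≠ 4b, so that E: y² = x(x² + ax + b) is an elliptic curve over K. Suppose Q = (u, v) ∈ E(K) satisfies 2Q = (0,0). Then u ≠ 0 and v ≠ 0, and setting e = v/u and f = u one has a = e² − 2f, b = f² and Q = (f, ef); in particular E equals the curve E_{e,f}: y² = x(x² + (e²−2f)x + f²) and Q has exact order 4. -/

import Mathlib

/-!
The tangent line at `Q = (u, v)` meets `E` again at `-2Q = (0, 0)`, so it is `y = e x` with
`e u = v`. Hence `x (x² + a x + b) - e² x² = x (x - u)²`, and comparing coefficients gives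
`a = e² - 2u` and `b = u²`; `v ≠ 0` because `Q` is not `2`-torsion, and then `u ≠ 0`.
Since `(0, 0)` has order `2`, `Q` has order `4`.
-/

open WeierstrassCurve

/-- The Weierstrass curve `y² = x(x² + ax + b)`, i.e. `a₁ = a₃ = a₆ = 0`, `a₂ = a`,
`a₄ = b`. -/
def Wab {K : Type*} [Field K] (a b : K) : WeierstrassCurve K :=
  { a₁ := 0, a₂ := a, a₃ := 0, a₄ := b, a₆ := 0 }

lemma addOrderOf_eq_four {G : Type*} [AddMonoid G] {x t : G} (hx : 2 • x = t) (ht : t ≠ 0)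
    (h2t : 2 • t = 0) : addOrderOf x = 4 := by
  have : Fact (Nat.Prime 2) := ⟨Nat.prime_two⟩
  refine addOrderOf_eq_prime_pow (p := 2) (n := 1) ?_ ?_
  · rwa [pow_one, hx]
  · rwa [pow_succ, pow_one, mul_nsmul, hx]

namespace WeierstrassCurve.Affine.Point

variable {F : Type*} [Field F] [DecidableEq F] {W : Affine F}

lemma add_self_eq_some {x y x' y' : F} {h : W.Nonsingular x y} {h' : W.Nonsingular x' y'}
    (H : some x y h + some x y h = some x' y' h') :
    y ≠ W.negY x y ∧ W.addX x x (W.slope x x y y) = x' ∧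
      W.addY x x y (W.slope x x y y) = y' := by
  by_cases hy : y = W.negY x y
  · rw [add_self_of_Y_eq hy] at H
    exact absurd H.symm (some_ne_zero h')
  · rw [add_self_of_Y_ne hy, some.injEq] at H
    exact ⟨hy, H⟩

end WeierstrassCurve.Affine.Point

namespace Wab

variable {K : Type*} [Field K] {a b : K}

lemma negY (x y : K) : (Wab a b).toAffine.negY x y = -y := by
  simp [Wab, Affine.negY]

lemma equation_iff (x y : K) : (Wab a b).toAffine.Equation x y ↔ y ^ 2 = x * (x ^ 2 + a * x + b) := by
  rw [Affine.equation_iff]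
  simp only [Wab]
  constructor <;> intro h <;> linear_combination h

variable [DecidableEq K]

lemma two_smul_origin (h0 : (Wab a b).toAffine.Nonsingular 0 0) :
    2 • Affine.Point.some _ _ h0 = 0 := by
  rw [two_smul]
  exact Affine.Point.add_self_of_Y_eq (by rw [negY, neg_zero])

lemma eq_of_two_smul_eq_origin {u v : K} {hQ : (Wab a b).toAffine.Nonsingular u v}
    {h0 : (Wab a b).toAffine.Nonsingular 0 0}
    (h : 2 • Affine.Point.some _ _ hQ = Affine.Point.some _ _ h0) :
    u ≠ 0 ∧ v ≠ 0 ∧ a = (v / u) ^ 2 - 2 * u ∧ b = u ^ 2 := by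
  rw [two_smul] at h
  obtain ⟨hy, hX₀, hY₀⟩ := Affine.Point.add_self_eq_some h
  set e := (Wab a b).toAffine.slope u u v v
  have hv : v ≠ 0 := by
    rintro rfl
    exact hy (by rw [negY, neg_zero])
  have hX : e ^ 2 = a + 2 * u := by
    simp only [Affine.addX, Wab] at hX₀
    linear_combination hX₀
  have hY : e * u = v := by
    simp only [Affine.addY, Affine.negAddY, Affine.addX, Affine.negY, Wab] at hY₀
    linear_combination hY₀ + e * hX
  have hE := (equation_iff u v).mp hQ.1
  have hu : u ≠ 0 := by
    rintro rfl
    exact hv (by simpa using hY.symm)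
  have he : e = v / u := by rw [eq_div_iff hu, hY]
  refine ⟨hu, hv, by rw [← he, hX]; ring, mul_right_cancel₀ hu ?_⟩
  linear_combination -hE + u ^ 2 * hX - (v + e * u) * hY

end Wab

open Classical in
theorem stmt2_general {K : Type*} [Field K]
    (a b u v : K)
    (hQ : (Wab a b).toAffine.Nonsingular u v)
    (h2Q : ∃ h0 : (Wab a b).toAffine.Nonsingular 0 0,
      2 • (Affine.Point.some _ _ hQ) = Affine.Point.some _ _ h0) :
    u ≠ 0 ∧ v ≠ 0 ∧
    a = (v / u) ^ 2 - 2 * u ∧ b = u ^ 2 ∧ v = (v / u) * u ∧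
    Wab a b = Wab ((v / u) ^ 2 - 2 * u) (u ^ 2) ∧
    addOrderOf (Affine.Point.some _ _ hQ) = 4 := by
  obtain ⟨h0, h2Q⟩ := h2Q
  obtain ⟨hu, hv, ha, hb⟩ := Wab.eq_of_two_smul_eq_origin h2Q
  exact ⟨hu, hv, ha, hb, (div_mul_cancel₀ v hu).symm, by rw [← ha, ← hb],
    addOrderOf_eq_four h2Q (Affine.Point.some_ne_zero h0) (Wab.two_smul_origin h0)⟩

open Classical in
/-- Let `K` be a field with `char K ∉ {2,3}`, `a, b ∈ K` with `b ≠ 0` and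
`a² ≠ 4b`, so `E : y² = x(x² + ax + b)` is an elliptic curve.  If `Q = (u,v) ∈ E(K)`
satisfies `2Q = (0,0)`, then `u ≠ 0`, `v ≠ 0`, and with `e := v/u`, `f := u` one has
`a = e² − 2f`, `b = f²` and `Q = (f, ef)` (so `E = E_{e,f}`); moreover `Q` has exact
order `4`. -/
theorem stmt2 {K : Type*} [Field K] (h2 : (2 : K) ≠ 0) (h3 : (3 : K) ≠ 0)
    (a b u v : K) (hb : b ≠ 0) (hab : a ^ 2 ≠ 4 * b)
    (hQ : (Wab a b).toAffine.Nonsingular u v)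
    (h2Q : ∃ h0 : (Wab a b).toAffine.Nonsingular 0 0,
      2 • (Affine.Point.some _ _ hQ) = Affine.Point.some _ _ h0) :
    u ≠ 0 ∧ v ≠ 0 ∧
    a = (v / u) ^ 2 - 2 * u ∧ b = u ^ 2 ∧ v = (v / u) * u ∧
    Wab a b = Wab ((v / u) ^ 2 - 2 * u) (u ^ 2) ∧
    addOrderOf (Affine.Point.some _ _ hQ) = 4 :=
  stmt2_general a b u v hQ h2Q
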